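/- Let c > 0 be a real number, q ∈ ℝ^M a query feature vector, D a natural number, and let a query consist of D items given by x^F : Fin D → ℝ^{K₁} and x^S : Fin D → ℝ^{K₂}, where every coordinate of every x^S(j) is strictly positive. Let π be a permutation of Fin D that ranks the unscaled items by SIR score in descending order, i.e. for all ranks r ≤ s in Fin D: f_n(q, x^F(π⁻¹(r)), x^S(π⁻¹(r))) ≥ f_n(q, x^F(π⁻¹(s)), x^S(π⁻¹(s))). Then π also ranks the items with uniformly rescaled scale-sensitive features in descending order: for all ranks r ≤ s in Fin D, f_n(q, x^F(π⁻¹(r)), c • x^S(π⁻¹(r))) ≥ f_n(q, x^F(π⁻¹(s)), c • x^S(π⁻¹(s))). Hence the ranking produced by the SIR scoring function is scale-invariant. -/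

import Mathlib

open Finset

/-- The wide path: inner product of the weights `w` with the Kronecker product
of `f_s q` and the componentwise logarithm of the scale-sensitive features. -/
noncomputable def fw {M K₂ L : ℕ} (f_s : (Fin M → ℝ) → Fin L → ℝ)
    (w : Fin L × Fin K₂ → ℝ) (q : Fin M → ℝ) (xS : Fin K₂ → ℝ) : ℝ :=
  ∑ p : Fin L × Fin K₂, w p * f_s q p.1 * Real.log (xS p.2)

/-- The SIR scoring function: sum of the deep path and the wide path. -/
noncomputable def fn {M K₁ K₂ L : ℕ}
    (f_d : (Fin M → ℝ) → (Fin K₁ → ℝ) → ℝ)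
    (f_s : (Fin M → ℝ) → Fin L → ℝ) (w : Fin L × Fin K₂ → ℝ)
    (q : Fin M → ℝ) (xF : Fin K₁ → ℝ) (xS : Fin K₂ → ℝ) : ℝ :=
  f_d q xF + fw f_s w q xS

/- Rescaling multiplies every scale-sensitive feature by `c`, which the logarithm turns into the
additive shift `log c`; so the wide path, and with it the score, moves by the same amount for every
item of the query, and adding a common constant to all scores preserves their order. -/
theorem fw_smul {M K₂ L : ℕ} (f_s : (Fin M → ℝ) → Fin L → ℝ) (w : Fin L × Fin K₂ → ℝ)
    (q : Fin M → ℝ) {c : ℝ} (hc : c ≠ 0) {xS : Fin K₂ → ℝ} (hx : ∀ k, xS k ≠ 0) :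
    fw f_s w q (c • xS) = fw f_s w q xS + fw f_s w q (fun _ ↦ c) := by
  unfold fw
  rw [← sum_add_distrib]
  refine sum_congr rfl fun p _ ↦ ?_
  rw [Pi.smul_apply, smul_eq_mul, Real.log_mul hc (hx p.2)]
  ring

theorem fn_smul {M K₁ K₂ L : ℕ} (f_d : (Fin M → ℝ) → (Fin K₁ → ℝ) → ℝ)
    (f_s : (Fin M → ℝ) → Fin L → ℝ) (w : Fin L × Fin K₂ → ℝ) (q : Fin M → ℝ)
    {c : ℝ} (hc : c ≠ 0) (xF : Fin K₁ → ℝ) {xS : Fin K₂ → ℝ} (hx : ∀ k, xS k ≠ 0) :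
    fn f_d f_s w q xF (c • xS) = fn f_d f_s w q xF xS + fw f_s w q (fun _ ↦ c) := by
  rw [fn, fn, fw_smul f_s w q hc hx, add_assoc]

/-- a permutation ranking the items of a query by SIR score in
descending order also ranks the items with uniformly rescaled scale-sensitive
features in descending order; hence the SIR ranking is scale-invariant. -/
theorem sir_ranking_scale_invariant
    {M K₁ K₂ L : ℕ}
    (f_d : (Fin M → ℝ) → (Fin K₁ → ℝ) → ℝ)
    (f_s : (Fin M → ℝ) → Fin L → ℝ) (w : Fin L × Fin K₂ → ℝ)
    (c : ℝ) (hc : 0 < c)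
    (q : Fin M → ℝ)
    (D : ℕ) (xF : Fin D → Fin K₁ → ℝ) (xS : Fin D → Fin K₂ → ℝ)
    (hx : ∀ j m, 0 < xS j m)
    (π : Equiv.Perm (Fin D))
    (hπ : ∀ r s : Fin D, r ≤ s →
      fn f_d f_s w q (xF (π.symm r)) (xS (π.symm r)) ≥
        fn f_d f_s w q (xF (π.symm s)) (xS (π.symm s))) :
    ∀ r s : Fin D, r ≤ s →
      fn f_d f_s w q (xF (π.symm r)) (c • xS (π.symm r)) ≥
        fn f_d f_s w q (xF (π.symm s)) (c • xS (π.symm s)) := by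
  intro r s hrs
  have hxS : ∀ j k, xS j k ≠ 0 := fun j k ↦ (hx j k).ne'
  rw [fn_smul f_d f_s w q hc.ne' _ (hxS _), fn_smul f_d f_s w q hc.ne' _ (hxS _)]
  exact add_le_add_left (hπ r s hrs) _
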